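/- arXiv:2007.00256 — 2 statements merged into one kernel-verified Lean document; each statement's English description precedes it below -/
import Mathlib

section
/- Let a > 1, n ≥ 1 an integer, L > 1, b ≠ 0, σ > 0, Ξ₀ > 0, R real, and let ε satisfy 0 < ε < 1/2. Define Φ(i) = (ε/(1−ε))^i · (1−2ε)/(1−ε) and v(i) = L^i · Ξ₀ / 2^(nR−2). Then the doubly-indexed family (i,j) ↦ Φ(i) · (1−ε) · ( v(i)² · b² · ε^j · a^(2(jn−1)) + σ² · ε^j · (a^(2(j+1)n) − 1)/(a² − 1) ) is summable if and only if ε·(1 + L²) < 1 and ε·a^(2n) < 1. -/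
set_option maxHeartbeats 1000000


theorem stmt_4 (a : ℝ) (ha : 1 < a) (n : ℕ) (hn : 1 ≤ n)
    (L b σ Ξ₀ R : ℝ) (hL : 1 < L) (hb : b ≠ 0) (hσ : 0 < σ) (hΞ : 0 < Ξ₀)
    (ε : ℝ) (hε0 : 0 < ε) (hε1 : ε < 1 / 2)
    (Φ : ℕ → ℝ) (hΦ : ∀ i, Φ i = (ε / (1 - ε)) ^ i * (1 - 2 * ε) / (1 - ε))
    (v : ℕ → ℝ) (hv : ∀ i, v i = L ^ i * Ξ₀ / (2 : ℝ) ^ ((n : ℝ) * R - 2)) :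
    (Summable fun p : ℕ × ℕ =>
      Φ p.1 * (1 - ε) *
        ((v p.1) ^ 2 * b ^ 2 * ε ^ p.2 * a ^ (2 * ((p.2 : ℤ) * n - 1)) +
          σ ^ 2 * ε ^ p.2 * (a ^ (2 * (p.2 + 1) * n) - 1) / (a ^ 2 - 1)))
      ↔ (ε * (1 + L ^ 2) < 1 ∧ ε * a ^ (2 * n) < 1) := by
  have h1ε : (0:ℝ) < 1 - ε := by linarith
  have h2ε : (0:ℝ) < 1 - 2 * ε := by linarith
  have ha0 : (0:ℝ) < a := by linarith
  have ha2 : (0:ℝ) < a ^ 2 - 1 := by nlinarith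
  have hP : (0:ℝ) < (2 : ℝ) ^ ((n : ℝ) * R - 2) := by positivity
  have hA1 : (1:ℝ) < a ^ (2 * n) := one_lt_pow₀ ha (by omega)
  set q : ℝ := ε / (1 - ε) with hq
  set x : ℝ := q * L ^ 2 with hx
  set y : ℝ := ε * a ^ (2 * n) with hy
  set A : ℝ := a ^ (2 * n) with hAdef
  set K1 : ℝ := (1 - 2 * ε) * b ^ 2 * Ξ₀ ^ 2 / ((2 : ℝ) ^ ((n : ℝ) * R - 2)) ^ 2 / a ^ 2
    with hK1
  set K2 : ℝ := (1 - 2 * ε) * σ ^ 2 / (a ^ 2 - 1) with hK2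
  have hq0 : 0 < q := div_pos hε0 h1ε
  have hq1 : q < 1 := (div_lt_one h1ε).mpr (by linarith)
  have hx0 : 0 < x := by positivity
  have hy0 : 0 < y := by positivity
  have hK10 : 0 < K1 := by
    have := hb
    have hb2 : 0 < b ^ 2 := by positivity
    positivity
  have hK20 : 0 < K2 := by positivity
  -- pointwise identity
  have hpt : ∀ p : ℕ × ℕ,
      Φ p.1 * (1 - ε) *
        ((v p.1) ^ 2 * b ^ 2 * ε ^ p.2 * a ^ (2 * ((p.2 : ℤ) * n - 1)) +
          σ ^ 2 * ε ^ p.2 * (a ^ (2 * (p.2 + 1) * n) - 1) / (a ^ 2 - 1))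
      = K1 * (x ^ p.1 * y ^ p.2) + K2 * (q ^ p.1 * (A * y ^ p.2 - ε ^ p.2)) := by
    rintro ⟨i, j⟩
    have hz : a ^ (2 * ((j : ℤ) * n - 1)) = a ^ (2 * j * n) / a ^ 2 := by
      rw [show (2 * ((j : ℤ) * n - 1)) = ((2 * j * n : ℕ) : ℤ) - ((2 : ℕ) : ℤ) by
        push_cast; ring, zpow_sub₀ (ne_of_gt ha0), zpow_natCast, zpow_natCast]
    simp only [hΦ, hv, hz]
    have hxpow : x ^ i = q ^ i * (L ^ i) ^ 2 := by
      rw [hx, mul_pow, ← pow_mul, ← pow_mul, mul_comm i 2]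
    have hypowj : y ^ j = ε ^ j * a ^ (2 * j * n) := by
      rw [hy, mul_pow, ← pow_mul]; ring_nf
    have hAy : A * y ^ j = ε ^ j * a ^ (2 * (j + 1) * n) := by
      rw [hypowj, hAdef, ← mul_assoc, mul_comm A, mul_assoc, ← pow_add]
      ring_nf
    rw [hxpow, hAy, hypowj, hK1, hK2, hq, div_pow]
    field_simp
  rw [summable_congr hpt]
  have hsum_nonneg : ∀ p : ℕ × ℕ, 0 ≤ K2 * (q ^ p.1 * (A * y ^ p.2 - ε ^ p.2)) := by
    rintro ⟨i, j⟩
    have hAy : A * y ^ j - ε ^ j = ε ^ j * (A ^ (j + 1) - 1) := by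
      rw [hy]; ring
    have h1A : (1:ℝ) ≤ A ^ (j + 1) := one_le_pow₀ hA1.le
    have hej : (0:ℝ) ≤ ε ^ j := by positivity
    have h0 : 0 ≤ A * y ^ j - ε ^ j := by rw [hAy]; nlinarith
    positivity
  constructor
  · intro h
    have hgeo : ∀ r : ℝ, 0 ≤ r → Summable (fun k : ℕ => r ^ k) → r < 1 := by
      intro r hr hs
      have := summable_geometric_iff_norm_lt_one.mp hs
      rwa [Real.norm_eq_abs, abs_of_nonneg hr] at this
    constructor
    · -- slice j = 0 gives x < 1
      have hinj : Function.Injective (fun i : ℕ => ((i, 0) : ℕ × ℕ)) := by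
        intro i j hij; simpa using hij
      have h1 := h.comp_injective hinj
      have h2 : Summable fun i : ℕ => K1 * x ^ i := by
        apply h1.of_nonneg_of_le (fun i => by positivity)
        intro i
        have := hsum_nonneg (i, 0)
        simp only [Function.comp_apply, pow_zero, mul_one] at this ⊢
        nlinarith [pow_nonneg hx0.le i]
      have hx1 : x < 1 :=
        hgeo x hx0.le ((summable_mul_left_iff hK10.ne').mp h2)
      rw [hx, hq, div_mul_eq_mul_div, div_lt_one h1ε] at hx1
      nlinarith
    · -- slice i = 0 gives y < 1
      have hinj : Function.Injective (fun j : ℕ => ((0, j) : ℕ × ℕ)) := by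
        intro i j hij; simpa using hij
      have h1 := h.comp_injective hinj
      have h2 : Summable fun j : ℕ => K1 * y ^ j := by
        apply h1.of_nonneg_of_le (fun j => by positivity)
        intro j
        have := hsum_nonneg (0, j)
        simp only [Function.comp_apply, pow_zero, one_mul] at this ⊢
        nlinarith [pow_nonneg hy0.le j]
      have hy1 : y < 1 :=
        hgeo y hy0.le ((summable_mul_left_iff hK10.ne').mp h2)
      rwa [hy] at hy1
  · rintro ⟨hL1, hA1'⟩
    have hx1 : x < 1 := by
      rw [hx, hq, div_mul_eq_mul_div, div_lt_one h1ε]; nlinarith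
    have hy1 : y < 1 := by rw [hy]; exact hA1'
    have Sx : Summable fun i : ℕ => x ^ i := summable_geometric_of_lt_one hx0.le hx1
    have Sy : Summable fun j : ℕ => y ^ j := summable_geometric_of_lt_one hy0.le hy1
    have Sq : Summable fun i : ℕ => q ^ i := summable_geometric_of_lt_one hq0.le hq1
    have Se : Summable fun j : ℕ => ε ^ j :=
      summable_geometric_of_lt_one hε0.le (by linarith)
    have S1 : Summable fun p : ℕ × ℕ => x ^ p.1 * y ^ p.2 :=
      Sx.mul_of_nonneg Sy (fun i => pow_nonneg hx0.le i) (fun j => pow_nonneg hy0.le j)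
    have S2a : Summable fun p : ℕ × ℕ => q ^ p.1 * y ^ p.2 :=
      Sq.mul_of_nonneg Sy (fun i => pow_nonneg hq0.le i) (fun j => pow_nonneg hy0.le j)
    have S2b : Summable fun p : ℕ × ℕ => q ^ p.1 * ε ^ p.2 :=
      Sq.mul_of_nonneg Se (fun i => pow_nonneg hq0.le i) (fun j => pow_nonneg hε0.le j)
    have S2 : Summable fun p : ℕ × ℕ => q ^ p.1 * (A * y ^ p.2 - ε ^ p.2) := by
      have := (S2a.mul_left A).sub S2b
      exact this.congr (fun p => by ring)
    exact (S1.mul_left K1).add (S2.mul_left K2)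
end

section
/- Let Q(x) = (1/√(2π)) ∫_x^∞ exp(−u²/2) du. Let a > 1, ν > 0, and let C, R be real numbers with C − R > 2·√(ν·ln a). Then the sequence n ↦ Q(√(n/ν)·(C − R)) · a^(2n) tends to 0 as n → ∞. -/
open MeasureTheory

noncomputable def gaussQ (x : ℝ) : ℝ :=
  (1 / Real.sqrt (2 * Real.pi)) * ∫ u in Set.Ioi x, Real.exp (-u ^ 2 / 2)

/-!
The Chernoff-type bound `Q(x) ≤ exp(-x²/2)` for `x ≥ 1` turns `Q(√(n/ν) δ) a^(2n)` into at most
`(exp(-δ²/(2ν)) a²)^n`, and the ratio `exp(-δ²/(2ν)) a²` is below `1` exactly when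
`δ² > 4 ν log a`, i.e. when `δ = C - R > 2 √(ν log a)`.
-/

open Real Filter Set

lemma gaussQ_nonneg (x : ℝ) : 0 ≤ gaussQ x :=
  mul_nonneg (by positivity) (setIntegral_nonneg measurableSet_Ioi fun _ _ => (exp_pos _).le)

lemma integrableOn_exp_neg_sq_div_two (s : Set ℝ) :
    IntegrableOn (fun u : ℝ => exp (-u ^ 2 / 2)) s := by
  have h := integrable_exp_neg_mul_sq (b := 1 / 2) (by norm_num)
  refine (h.congr (ae_of_all _ fun u => ?_)).integrableOn
  ring_nf

/- For `u ≥ x ≥ 1` we have `u²/2 - x²/2 = (u - x)(u + x)/2 ≥ u - x`, so the integrand is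
dominated by `exp(-x²/2) exp(-(u - x))`, whose integral over `(x, ∞)` is `exp(-x²/2)`. -/
lemma integral_Ioi_exp_neg_sq_div_two_le {x : ℝ} (hx : 1 ≤ x) :
    ∫ u in Ioi x, exp (-u ^ 2 / 2) ≤ exp (-x ^ 2 / 2) := by
  have hdom : ∀ u ∈ Ioi x, exp (-u ^ 2 / 2) ≤ exp (x - x ^ 2 / 2) * exp (-u) := by
    intro u hu
    rw [← exp_add, exp_le_exp]
    nlinarith [mem_Ioi.1 hu]
  calc ∫ u in Ioi x, exp (-u ^ 2 / 2)
      ≤ ∫ u in Ioi x, exp (x - x ^ 2 / 2) * exp (-u) :=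
        setIntegral_mono_on (integrableOn_exp_neg_sq_div_two _)
          ((integrableOn_exp_neg_Ioi x).const_mul _) measurableSet_Ioi hdom
    _ = exp (x - x ^ 2 / 2) * exp (-x) := by rw [integral_const_mul, integral_exp_neg_Ioi]
    _ = exp (-x ^ 2 / 2) := by rw [← exp_add]; ring_nf

lemma gaussQ_le_exp_neg_sq_div_two {x : ℝ} (hx : 1 ≤ x) : gaussQ x ≤ exp (-x ^ 2 / 2) := by
  have hc : 1 / √(2 * π) ≤ 1 := by
    rw [div_le_one (by positivity), one_le_sqrt]
    linarith [pi_gt_three]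
  exact (mul_le_of_le_one_left (setIntegral_nonneg measurableSet_Ioi fun _ _ => (exp_pos _).le)
    hc).trans (integral_Ioi_exp_neg_sq_div_two_le hx)

lemma tendsto_sqrt_natCast_div_mul_atTop {ν δ : ℝ} (hν : 0 < ν) (hδ : 0 < δ) :
    Tendsto (fun n : ℕ => √((n : ℝ) / ν) * δ) atTop atTop :=
  (tendsto_sqrt_atTop.comp
    (tendsto_natCast_atTop_atTop.atTop_div_const hν)).atTop_mul_const hδ

lemma eventually_gaussQ_sqrt_natCast_div_mul_le {ν δ : ℝ} (hν : 0 < ν) (hδ : 0 < δ) :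
    ∀ᶠ n : ℕ in atTop, gaussQ (√((n : ℝ) / ν) * δ) ≤ exp (-δ ^ 2 / (2 * ν)) ^ n := by
  filter_upwards [(tendsto_sqrt_natCast_div_mul_atTop hν hδ).eventually_ge_atTop 1] with n hn
  calc gaussQ (√((n : ℝ) / ν) * δ) ≤ exp (-(√((n : ℝ) / ν) * δ) ^ 2 / 2) :=
        gaussQ_le_exp_neg_sq_div_two hn
    _ = exp (-δ ^ 2 / (2 * ν)) ^ n := by
        rw [mul_pow, sq_sqrt (by positivity), ← exp_nat_mul]
        congr 1
        field_simp

lemma exp_neg_sq_div_mul_sq_lt_one {a ν δ : ℝ} (ha : 0 < a) (hν : 0 < ν)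
    (h : 4 * (ν * log a) < δ ^ 2) : exp (-δ ^ 2 / (2 * ν)) * a ^ 2 < 1 := by
  rw [← exp_log (pow_pos ha 2), log_pow, ← exp_add, exp_lt_one_iff, neg_div,
    neg_add_lt_iff_lt_add, add_zero, lt_div_iff₀ (by positivity)]
  push_cast
  linarith

theorem stmt_6 (a ν C R : ℝ) (ha : 1 < a) (hν : 0 < ν)
    (hCR : C - R > 2 * Real.sqrt (ν * Real.log a)) :
    Filter.Tendsto (fun n : ℕ => gaussQ (Real.sqrt ((n : ℝ) / ν) * (C - R)) * a ^ (2 * n))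
      Filter.atTop (nhds 0) := by
  have hlog : 0 ≤ ν * log a := mul_nonneg hν.le (log_nonneg ha.le)
  have hδ : 0 < C - R := lt_of_le_of_lt (by positivity) hCR
  have hδsq : 4 * (ν * log a) < (C - R) ^ 2 := by
    have := pow_lt_pow_left₀ hCR (by positivity) two_ne_zero
    rw [mul_pow, sq_sqrt hlog] at this
    linarith
  set r := exp (-(C - R) ^ 2 / (2 * ν)) * a ^ 2
  have hr : r < 1 := exp_neg_sq_div_mul_sq_lt_one (by linarith) hν hδsq
  refine squeeze_zero' (Eventually.of_forall fun n => ?_) ?_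
    (tendsto_pow_atTop_nhds_zero_of_lt_one (by positivity) hr)
  · exact mul_nonneg (gaussQ_nonneg _) (by positivity)
  filter_upwards [eventually_gaussQ_sqrt_natCast_div_mul_le hν hδ] with n hn
  calc gaussQ (√((n : ℝ) / ν) * (C - R)) * a ^ (2 * n)
      ≤ exp (-(C - R) ^ 2 / (2 * ν)) ^ n * (a ^ 2) ^ n := by
        rw [← pow_mul, mul_comm 2]
        gcongr
    _ = r ^ n := (mul_pow _ _ _).symm
end
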